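/- arXiv:1702.02762 — 3 statements merged into one kernel-verified Lean document; each statement's English description precedes it below -/
import Mathlib

section
/- For each n ∈ ℕ, the set Sₙ of all elements of L²(Ω, ℙ) admitting a representative measurable with respect to the σ-field generated by ζ₀, …, ζₙ is a closed linear subspace of L²(Ω, ℙ) of dimension 2^{n+1}, and the family {Z_σ : σ ⊆ {0,…,n}} is an orthonormal basis of Sₙ. -/
open MeasureTheory ProbabilityTheory
open scoped RealInnerProductSpace ENNReal

noncomputable section

/-- `Ω = {-1,1}^ℕ`, with the two-point set `{-1,1}` coded by `Bool`
(`true` codes `1`, `false` codes `-1`). -/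
abbrev Omega : Type := ℕ → Bool

/-- The canonical projection `ζₙ(ω) = ω(n) ∈ {-1,1}`. -/
def zeta (n : ℕ) (ω : Omega) : ℝ := if ω n then 1 else -1

/-- `Zₙ = (ζₙ + qₙ - pₙ)/(2√(pₙ qₙ))`, as a pointwise function on `Ω`. -/
def Zf (p : ℕ → ℝ) (n : ℕ) (ω : Omega) : ℝ :=
  (zeta n ω + (1 - p n) - p n) / (2 * Real.sqrt (p n * (1 - p n)))

/-- `Z_σ = ∏_{j∈σ} Z_j`, as a pointwise function on `Ω` (`Z_∅ = 1`). -/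
def ZSf (p : ℕ → ℝ) (σ : Finset ℕ) (ω : Omega) : ℝ := ∏ j ∈ σ, Zf p j ω

lemma measurable_ZSf (p : ℕ → ℝ) (σ : Finset ℕ) : Measurable (ZSf p σ) := by
  apply Finset.measurable_prod
  intro j _
  unfold Zf zeta
  apply Measurable.div _ measurable_const
  apply Measurable.sub _ measurable_const
  apply Measurable.add _ measurable_const
  exact (Measurable.of_discrete (f := fun b : Bool => if b = true then (1:ℝ) else -1)).comp
    (measurable_pi_apply j)

/-- A pointwise bound for `Z_j`. -/
def Mb (p : ℕ → ℝ) (j : ℕ) : ℝ :=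
  max |(1 + (1 - p j) - p j) / (2 * Real.sqrt (p j * (1 - p j)))|
      |(-1 + (1 - p j) - p j) / (2 * Real.sqrt (p j * (1 - p j)))|

lemma abs_Zf_le (p : ℕ → ℝ) (j : ℕ) (ω : Omega) : |Zf p j ω| ≤ Mb p j := by
  unfold Zf zeta Mb
  cases h : ω j
  · simpa using le_max_right _ _
  · simpa using le_max_left _ _

lemma memLp_ZSf (p : ℕ → ℝ) (P : Measure Omega) [IsProbabilityMeasure P] (σ : Finset ℕ) :
    MemLp (ZSf p σ) 2 P := by
  refine MemLp.of_bound (measurable_ZSf p σ).aestronglyMeasurable (∏ j ∈ σ, Mb p j) ?_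
  filter_upwards with ω
  rw [Real.norm_eq_abs]
  calc |∏ j ∈ σ, Zf p j ω| = ∏ j ∈ σ, |Zf p j ω| := Finset.abs_prod σ _
  _ ≤ ∏ j ∈ σ, Mb p j :=
      Finset.prod_le_prod (fun j _ => abs_nonneg _) (fun j _ => abs_Zf_le p j ω)

/-- `Z_σ` as an element of the real Hilbert space `L²(Ω, ℙ)`. -/
def ZLp (p : ℕ → ℝ) (P : Measure Omega) [IsProbabilityMeasure P] (σ : Finset ℕ) :
    Lp ℝ 2 P :=
  (memLp_ZSf p P σ).toLp _

/-- The `w`-counting measure `#_w(σ) = ∑_{j∈σ} w(j)`. -/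
def cw (w : ℕ → ℝ) (σ : Finset ℕ) : ℝ := ∑ j ∈ σ, w j

/-- The domain `D_w = {ξ ∈ L²(Ω,ℙ) : ∑_{σ∈Γ} #_w(σ) |⟨Z_σ, ξ⟩|² < ∞}`. -/
def Dw (p : ℕ → ℝ) (P : Measure Omega) [IsProbabilityMeasure P] (w : ℕ → ℝ) :
    Set (Lp ℝ 2 P) :=
  {ξ | Summable fun σ : Finset ℕ => cw w σ * ⟪ZLp p P σ, ξ⟫ ^ 2}

/-- The `w`-energy form `E_w(ξ, η) = ∑_{k=0}^∞ w(k) ⟨∂ₖξ, ∂ₖη⟩`, where `D k` plays the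
role of the annihilation operator `∂ₖ`. -/
def Ew {P : Measure Omega} (w : ℕ → ℝ)
    (D : ℕ → (Lp ℝ 2 P →L[ℝ] Lp ℝ 2 P)) (ξ η : Lp ℝ 2 P) : ℝ :=
  ∑' k, w k * ⟪D k ξ, D k η⟫

/-- The σ-field on `Ω` generated by the coordinates `ζ₀, …, ζₙ`. -/
def Fn (n : ℕ) : MeasurableSpace Omega :=
  ⨆ i ∈ Finset.range (n + 1),
    MeasurableSpace.comap (fun ω : Omega => zeta i ω) (inferInstance : MeasurableSpace ℝ)

/-- `Sₙ`: elements of `L²(Ω,ℙ)` having a representative measurable w.r.t. `σ(ζ₀, …, ζₙ)`. -/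
def Sn (p : ℕ → ℝ) (P : Measure Omega) [IsProbabilityMeasure P] (n : ℕ) :
    Set (Lp ℝ 2 P) :=
  {ξ | ∃ g : Omega → ℝ, Measurable[Fn n] g ∧ (ξ : Omega → ℝ) =ᵐ[P] g}

/-!
An `Fn n`-measurable function factors through the restriction `ω ↦ (ω 0, …, ω n)`, so `Sₙ` is the
image of the `2^(n+1)`-dimensional space of functions on `{-1,1}^(n+1)` under a linear map into
`L²`. The `Z_σ` with `σ ⊆ {0, …, n}` lie in `Sₙ` and are orthonormal: by independence
`⟨Z_σ, Z_τ⟩ = ∏_{j ∈ σ ∪ τ} 𝔼[Z_j^([j ∈ σ] + [j ∈ τ])]`, and `𝔼 Z_j = 0`, `𝔼 Z_j² = 1`.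
Being `2^(n+1)` orthonormal vectors in a space of dimension at most `2^(n+1)`, they span it.
-/

section CompLp

variable {Ω Y : Type*} [MeasurableSpace Ω] [MeasurableSpace Y] [DiscreteMeasurableSpace Y]
  [Fintype Y] (μ : Measure Ω) [IsFiniteMeasure μ] {π : Ω → Y}

theorem memLp_comp_of_discrete (hπ : Measurable π) (h : Y → ℝ) (q : ℝ≥0∞) :
    MemLp (h ∘ π) q μ :=
  MemLp.of_discrete.comp_of_map hπ.aemeasurable

def compLp (hπ : Measurable π) (q : ℝ≥0∞) [Fact (1 ≤ q)] : (Y → ℝ) →ₗ[ℝ] Lp ℝ q μ where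
  toFun h := (memLp_comp_of_discrete μ hπ h q).toLp _
  map_add' _ _ := MemLp.toLp_add _ _
  map_smul' c _ := MemLp.toLp_const_smul c _

theorem coeFn_compLp (hπ : Measurable π) (q : ℝ≥0∞) [Fact (1 ≤ q)] (h : Y → ℝ) :
    compLp μ hπ q h =ᵐ[μ] h ∘ π :=
  (memLp_comp_of_discrete μ hπ h q).coeFn_toLp

theorem coe_range_compLp (hπ : Measurable π) (q : ℝ≥0∞) [Fact (1 ≤ q)] :
    (LinearMap.range (compLp μ hπ q) : Set (Lp ℝ q μ)) =
      {ξ : Lp ℝ q μ |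
        ∃ g : Ω → ℝ, Measurable[MeasurableSpace.comap π ‹_›] g ∧ (ξ : Ω → ℝ) =ᵐ[μ] g} := by
  ext ξ
  constructor
  · rintro ⟨h, rfl⟩
    exact ⟨h ∘ π, Measurable.of_discrete.comp (comap_measurable π), coeFn_compLp μ hπ q h⟩
  · rintro ⟨g, hg, hξ⟩
    refine ⟨Function.extend π g 0, Lp.ext ?_⟩
    have hfac : Function.extend π g 0 ∘ π = g := funext (hg.factorsThrough.extend_apply 0)
    exact ((coeFn_compLp μ hπ q _).trans (by rw [hfac])).trans hξ.symm

theorem finrank_range_compLp_le (hπ : Measurable π) (q : ℝ≥0∞) [Fact (1 ≤ q)] :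
    Module.finrank ℝ (LinearMap.range (compLp μ hπ q)) ≤ Fintype.card Y :=
  (LinearMap.finrank_range_le _).trans_eq (Module.finrank_fintype_fun_eq_card ℝ)

end CompLp

theorem Finset.prod_mul_prod_eq_prod_union_ite {ι M : Type*} [DecidableEq ι] [CommMonoid M]
    (s t : Finset ι) (f : ι → M) :
    (∏ i ∈ s, f i) * ∏ i ∈ t, f i =
      ∏ i ∈ s ∪ t, (if i ∈ s then f i else 1) * (if i ∈ t then f i else 1) := by
  rw [Finset.prod_mul_distrib, Finset.prod_ite_mem, Finset.prod_ite_mem,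
    Finset.union_inter_cancel_left, Finset.union_inter_cancel_right]

theorem inner_toLp_eq_integral {α : Type*} [MeasurableSpace α] {μ : Measure α} {f g : α → ℝ}
    (hf : MemLp f 2 μ) (hg : MemLp g 2 μ) :
    ⟪hf.toLp f, hg.toLp g⟫ = ∫ a, f a * g a ∂μ := by
  rw [L2.inner_def]
  refine integral_congr_ae ?_
  filter_upwards [hf.coeFn_toLp, hg.coeFn_toLp] with a hfa hga
  rw [hfa, hga, real_inner_eq_re_inner, RCLike.inner_apply, RCLike.conj_to_real, mul_comm]
  rfl

theorem ProbabilityTheory.iIndepFun.integral_finset_prod_comp {Ω ι : Type*} [MeasurableSpace Ω]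
    {μ : Measure Ω} {𝓧 : ι → Type*} [∀ i, MeasurableSpace (𝓧 i)] {X : ∀ i, Ω → 𝓧 i}
    (hX : iIndepFun X μ) (mX : ∀ i, AEMeasurable (X i) μ) {f : ∀ i, 𝓧 i → ℝ}
    (hf : ∀ i, AEStronglyMeasurable (f i) (μ.map (X i))) (s : Finset ι) :
    ∫ ω, ∏ i ∈ s, f i (X i ω) ∂μ = ∏ i ∈ s, ∫ ω, f i (X i ω) ∂μ := by
  simpa only [← Finset.prod_coe_sort s] using
    (hX.precomp Subtype.val_injective).integral_fun_prod_comp (fun i : s => mX i) (fun i => hf i)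

theorem integral_comp_bool {Ω : Type*} [MeasurableSpace Ω] {P : Measure Ω}
    [IsProbabilityMeasure P] {X : Ω → Bool} (hX : Measurable X) {t : ℝ}
    (ht : P.real {ω | X ω = true} = t) (f : Bool → ℝ) :
    ∫ ω, f (X ω) ∂P = t * f true + (1 - t) * f false := by
  have hfalse : P.real {ω | X ω = false} = 1 - t := by
    rw [← ht, ← probReal_compl_eq_one_sub (measurableSet_eq_fun hX measurable_const)]
    congr 1
    ext ω
    simp
  rw [← integral_map hX.aemeasurable (Measurable.of_discrete.aestronglyMeasurable),
    integral_fintype (Integrable.of_finite), Fintype.sum_bool,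
    map_measureReal_apply hX (measurableSet_singleton _),
    map_measureReal_apply hX (measurableSet_singleton _)]
  simp only [Set.preimage, Set.mem_singleton_iff, ht, hfalse, smul_eq_mul]

def stdBernoulli (t : ℝ) (b : Bool) : ℝ :=
  ((if b then 1 else -1) + (1 - t) - t) / (2 * Real.sqrt (t * (1 - t)))

theorem Zf_apply (p : ℕ → ℝ) (j : ℕ) (ω : Omega) : Zf p j ω = stdBernoulli (p j) (ω j) := rfl

theorem stdBernoulli_mean (t : ℝ) :
    t * stdBernoulli t true + (1 - t) * stdBernoulli t false = 0 := by
  simp only [stdBernoulli, if_true, Bool.false_eq_true, if_false]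
  field_simp
  ring

theorem stdBernoulli_sq_mean {t : ℝ} (h0 : 0 < t) (h1 : t < 1) :
    t * stdBernoulli t true ^ 2 + (1 - t) * stdBernoulli t false ^ 2 = 1 := by
  have hsq : Real.sqrt (t * (1 - t)) ^ 2 = t * (1 - t) :=
    Real.sq_sqrt (mul_pos h0 (sub_pos.mpr h1)).le
  have hne : Real.sqrt (t * (1 - t)) ≠ 0 := (Real.sqrt_pos.mpr (mul_pos h0 (sub_pos.mpr h1))).ne'
  simp only [stdBernoulli, if_true, Bool.false_eq_true, if_false]
  field_simp
  linear_combination (-4) * hsq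

section Orthonormality

variable {p : ℕ → ℝ} {P : Measure Omega} [IsProbabilityMeasure P]

theorem integral_ite_Zf_mul_ite_Zf (hp : ∀ n, 0 < p n ∧ p n < 1)
    (hdist : ∀ n, P {ω : Omega | ω n = true} = ENNReal.ofReal (p n))
    (j : ℕ) (A B : Prop) [Decidable A] [Decidable B] :
    ∫ ω, (if A then Zf p j ω else 1) * (if B then Zf p j ω else 1) ∂P =
      if (A ↔ B) then 1 else 0 := by
  have hreal : P.real {ω : Omega | ω j = true} = p j := by
    rw [measureReal_def, hdist, ENNReal.toReal_ofReal (hp j).1.le]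
  simp only [Zf_apply]
  rw [integral_comp_bool (measurable_pi_apply j) hreal
    (fun b => (if A then stdBernoulli (p j) b else 1) * (if B then stdBernoulli (p j) b else 1))]
  by_cases hA : A <;> by_cases hB : B <;>
    simp only [hA, hB, if_true, if_false, iff_self, iff_true, iff_false, not_true, mul_one, one_mul]
  · linear_combination stdBernoulli_sq_mean (hp j).1 (hp j).2
  · exact stdBernoulli_mean (p j)
  · exact stdBernoulli_mean (p j)
  · ring

theorem inner_ZLp (hp : ∀ n, 0 < p n ∧ p n < 1)
    (hdist : ∀ n, P {ω : Omega | ω n = true} = ENNReal.ofReal (p n))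
    (hindep : iIndepFun (fun n (ω : Omega) => ω n) P) (σ τ : Finset ℕ) :
    ⟪ZLp p P σ, ZLp p P τ⟫ = if σ = τ then 1 else 0 := by
  classical
  let f : ℕ → Bool → ℝ := fun j b =>
    (if j ∈ σ then stdBernoulli (p j) b else 1) * (if j ∈ τ then stdBernoulli (p j) b else 1)
  calc ⟪ZLp p P σ, ZLp p P τ⟫
      = ∫ ω, ZSf p σ ω * ZSf p τ ω ∂P := inner_toLp_eq_integral _ _
    _ = ∫ ω, ∏ j ∈ σ ∪ τ, f j (ω j) ∂P := by
        simp only [ZSf, Finset.prod_mul_prod_eq_prod_union_ite, Zf_apply, f]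
    _ = ∏ j ∈ σ ∪ τ, ∫ ω, f j (ω j) ∂P :=
        hindep.integral_finset_prod_comp (fun j => (measurable_pi_apply j).aemeasurable)
          (fun j => Measurable.of_discrete.aestronglyMeasurable) _
    _ = ∏ j ∈ σ ∪ τ, if (j ∈ σ ↔ j ∈ τ) then 1 else 0 :=
        Finset.prod_congr rfl fun j _ => integral_ite_Zf_mul_ite_Zf hp hdist j _ _
    _ = if σ = τ then 1 else 0 := by
        rw [Finset.prod_boole]
        congr 1
        simp only [Finset.ext_iff]
        grind

theorem orthonormal_ZLp (hp : ∀ n, 0 < p n ∧ p n < 1)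
    (hdist : ∀ n, P {ω : Omega | ω n = true} = ENNReal.ofReal (p n))
    (hindep : iIndepFun (fun n (ω : Omega) => ω n) P) :
    Orthonormal ℝ (ZLp p P) :=
  orthonormal_iff_ite.mpr (inner_ZLp hp hdist hindep)

theorem finrank_span_ZLp (hp : ∀ n, 0 < p n ∧ p n < 1)
    (hdist : ∀ n, P {ω : Omega | ω n = true} = ENNReal.ofReal (p n))
    (hindep : iIndepFun (fun n (ω : Omega) => ω n) P) (s : Finset ℕ) :
    Module.finrank ℝ (Submodule.span ℝ {x | ∃ σ, σ ⊆ s ∧ x = ZLp p P σ}) = 2 ^ s.card := by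
  have hrange : {x | ∃ σ, σ ⊆ s ∧ x = ZLp p P σ} = Set.range fun σ : s.powerset => ZLp p P σ := by
    ext x
    simp [eq_comm]
  rw [hrange, finrank_span_eq_card (b := fun σ : s.powerset => ZLp p P σ)
      ((orthonormal_ZLp hp hdist hindep).comp _ Subtype.val_injective).linearIndependent,
    Fintype.card_coe, Finset.card_powerset]

end Orthonormality

theorem comap_zeta (i : ℕ) :
    MeasurableSpace.comap (zeta i) (inferInstance : MeasurableSpace ℝ) =
      MeasurableSpace.comap (fun ω : Omega => ω i) ⊤ := by
  let e : Bool → ℝ := fun b => if b then 1 else -1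
  have he : Function.Injective e := by
    intro a b
    cases a <;> cases b <;> norm_num [e]
  have hcomap : MeasurableSpace.comap e (inferInstance : MeasurableSpace ℝ) = ⊤ :=
    top_le_iff.mp fun s _ => ⟨e '' s, (s.toFinite.image e).measurableSet, he.preimage_image s⟩
  rw [← hcomap, MeasurableSpace.comap_comp]
  rfl

theorem Fn_eq_comap_restrict (n : ℕ) :
    Fn n = MeasurableSpace.comap (Finset.range (n + 1)).restrict inferInstance := by
  rw [Fn, MeasurableSpace.pi, MeasurableSpace.comap_iSup, iSup_subtype']
  congr 1
  funext i
  rw [comap_zeta, MeasurableSpace.comap_comp]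
  rfl

theorem measurable_zeta_Fn {n i : ℕ} (hi : i ∈ Finset.range (n + 1)) :
    Measurable[Fn n] (zeta i) :=
  measurable_iff_comap_le.mpr
    (le_iSup₂ (f := fun i (_ : i ∈ Finset.range (n + 1)) =>
      MeasurableSpace.comap (zeta i) (inferInstance : MeasurableSpace ℝ)) i hi)

theorem measurable_ZSf_Fn (p : ℕ → ℝ) {n : ℕ} {σ : Finset ℕ} (hσ : σ ⊆ Finset.range (n + 1)) :
    Measurable[Fn n] (ZSf p σ) :=
  Finset.measurable_prod σ fun _ hj =>
    (((measurable_zeta_Fn (hσ hj)).add_const _).sub_const _).div_const _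

theorem ZLp_mem_Sn (p : ℕ → ℝ) (P : Measure Omega) [IsProbabilityMeasure P] {n : ℕ}
    {σ : Finset ℕ} (hσ : σ ⊆ Finset.range (n + 1)) : ZLp p P σ ∈ Sn p P n :=
  ⟨ZSf p σ, measurable_ZSf_Fn p hσ, (memLp_ZSf p P σ).coeFn_toLp⟩

theorem Sn_eq_range_compLp (p : ℕ → ℝ) (P : Measure Omega) [IsProbabilityMeasure P] (n : ℕ) :
    Sn p P n = LinearMap.range (compLp P (Finset.range (n + 1)).measurable_restrict 2) := by
  rw [coe_range_compLp, ← Fn_eq_comap_restrict]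
  rfl

theorem Sn_closed_subspace_dim
    (p : ℕ → ℝ) (P : Measure Omega) [IsProbabilityMeasure P]
    (hp : ∀ n, 0 < p n ∧ p n < 1)
    (hdist : ∀ n, P {ω : Omega | ω n = true} = ENNReal.ofReal (p n))
    (hindep : iIndepFun (fun n (ω : Omega) => ω n) P)
    (n : ℕ) :
    ∃ S : Submodule ℝ (Lp ℝ 2 P),
      (S : Set (Lp ℝ 2 P)) = Sn p P n ∧
      IsClosed (S : Set (Lp ℝ 2 P)) ∧
      Module.finrank ℝ S = 2 ^ (n + 1) ∧
      Orthonormal ℝ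
        (fun σ : {σ : Finset ℕ // σ ⊆ Finset.range (n + 1)} => ZLp p P σ.1) ∧
      Submodule.span ℝ
        {x : Lp ℝ 2 P | ∃ σ : Finset ℕ, σ ⊆ Finset.range (n + 1) ∧ x = ZLp p P σ} = S := by
  set S := Submodule.span ℝ
    {x : Lp ℝ 2 P | ∃ σ : Finset ℕ, σ ⊆ Finset.range (n + 1) ∧ x = ZLp p P σ}
  set L := compLp P (Finset.range (n + 1)).measurable_restrict 2
  have hrank : Module.finrank ℝ S = 2 ^ (n + 1) := by
    rw [finrank_span_ZLp hp hdist hindep, Finset.card_range]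
  have hle : S ≤ LinearMap.range L := by
    rw [Submodule.span_le, ← Sn_eq_range_compLp]
    rintro _ ⟨σ, hσ, rfl⟩
    exact ZLp_mem_Sn p P hσ
  have hS : S = LinearMap.range L := by
    refine Submodule.eq_of_le_of_finrank_le hle ?_
    calc Module.finrank ℝ (LinearMap.range L)
        ≤ Fintype.card (Finset.range (n + 1) → Bool) := finrank_range_compLp_le _ _ _
      _ = Module.finrank ℝ S := by
        rw [hrank, Fintype.card_fun, Fintype.card_bool, Fintype.card_coe, Finset.card_range]
  refine ⟨LinearMap.range L, (Sn_eq_range_compLp p P n).symm,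
    (LinearMap.range L).closed_of_finiteDimensional, hS ▸ hrank,
    (orthonormal_ZLp hp hdist hindep).comp _ Subtype.val_injective, hS⟩

end
end

section
/- For every ξ ∈ L²(Ω, ℙ), every contraction function C, and every k ∈ ℕ, the composition C∘ξ belongs to L²(Ω, ℙ) and ‖∂ₖ(C∘ξ)‖ ≤ ‖∂ₖξ‖. -/
open MeasureTheory ProbabilityTheory
open scoped RealInnerProductSpace ENNReal

noncomputable section

/-! On `{-1,1}^ℕ` the annihilation operator is the finite difference
`∂ₖ f (ω) = √(pₖ qₖ) (f (ω with ωₖ = 1) - f (ω with ωₖ = -1))`. This formula is a bounded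
operator on `L²`: by independence of the coordinates, the law of `ω ↦ (ω with ωₖ = b)` is at most
`ℙ{ωₖ = b}⁻¹ • ℙ`. It agrees with `∂ₖ` on every `Z_σ`, and the `Z_σ` span a dense subspace of `L²`
(each `1_{ωᵢ = b}` is affine in `Zᵢ`, so indicators of cylinder sets are finite combinations of
the `Z_σ`), hence `∂ₖ` is this difference operator. A contraction `C` shrinks every difference
`C (ξ ω⁺) - C (ξ ω⁻)` pointwise, so `‖∂ₖ (C ∘ ξ)‖ ≤ ‖∂ₖ ξ‖`. -/

open Function (update)

namespace MeasureTheory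

section Density

variable {α E : Type*} [MeasurableSpace α] [NormedAddCommGroup E] {μ : Measure α}
  {p : ℝ≥0∞} [Fact (1 ≤ p)] {𝒜 : Set (Set α)}

theorem Measure.MeasureDense.dense_of_indicatorConstLp_mem (h𝒜 : μ.MeasureDense 𝒜)
    (hp : p ≠ ∞) (V : AddSubgroup (Lp E p μ))
    (hV : ∀ s (hs : s ∈ 𝒜) (hμs : μ s ≠ ∞) (c : E),
      indicatorConstLp p (h𝒜.measurable s hs) hμs c ∈ V) :
    Dense (V : Set (Lp E p μ)) := by
  have : Fact (p ≠ ∞) := ⟨hp⟩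
  have hclosed := V.isClosed_topologicalClosure
  suffices ∀ f : Lp E p μ, f ∈ V.topologicalClosure from
    fun f => V.topologicalClosure_coe ▸ this f
  refine Lp.induction hp (motive := (· ∈ V.topologicalClosure)) ?_ ?_ hclosed
  · intro c s hs hμs
    rw [Lp.simpleFunc.coe_indicatorConst]
    refine closure_minimal ?_ hclosed
      (h𝒜.indicatorConstLp_subset_closure p c ⟨s, hs, hμs.ne, rfl⟩)
    rintro - ⟨t, ht, hμt, rfl⟩
    exact V.le_topologicalClosure (hV t ht hμt c)
  · intro f g _ _ _ hf hg
    exact V.topologicalClosure.add_mem hf hg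

end Density

section UpdateCoordinate

variable {ι : Type*} {X : ι → Type*} [∀ i, MeasurableSpace (X i)] {P : Measure (∀ i, X i)}

theorem indep_comap_eval_cylinderEvents_compl
    (hindep : iIndepFun (fun i (ω : ∀ i, X i) => ω i) P) (k : ι) :
    Indep ((‹∀ i, MeasurableSpace (X i)› k).comap (· k)) (cylinderEvents {k}ᶜ) P := by
  have h := indep_iSup_of_disjoint (fun i => (measurable_pi_apply i).comap_le)
    ((iIndepFun_iff_iIndep _ _ _).1 hindep) (disjoint_compl_right : Disjoint {k} {k}ᶜ)
  simpa [cylinderEvents] using h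

variable [DecidableEq ι]

theorem measurable_update_left_cylinderEvents_compl (k : ι) (x : X k) :
    Measurable[cylinderEvents {k}ᶜ] (update · k x) := by
  refine measurable_cylinderEvents_lambda _ fun j => ?_
  by_cases hj : j = k
  · subst hj
    simp
  · simpa [Function.update_of_ne hj] using measurable_cylinderEvent_apply (X := X) hj

variable [IsFiniteMeasure P] {k : ι} [MeasurableSingletonClass (X k)]

theorem map_update_le_smul (hindep : iIndepFun (fun i (ω : ∀ i, X i) => ω i) P) (x : X k)
    (hx : P {ω | ω k = x} ≠ 0) :
    P.map (update · k x) ≤ (P {ω | ω k = x})⁻¹ • P := by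
  refine Measure.le_iff.2 fun s hs => ?_
  rw [Measure.map_apply measurable_update_left hs, Measure.smul_apply, smul_eq_mul,
    ← ENNReal.mul_le_iff_le_inv hx (measure_ne_top _ _)]
  set B : Set (∀ i, X i) := {ω | ω k = x}
  set A : Set (∀ i, X i) := (update · k x) ⁻¹' s
  have hB : MeasurableSet[(‹∀ i, MeasurableSpace (X i)› k).comap (· k)] B :=
    ⟨{x}, measurableSet_singleton x, rfl⟩
  have hA : MeasurableSet[cylinderEvents {k}ᶜ] A :=
    measurable_update_left_cylinderEvents_compl k x hs
  have hBA : B ∩ A = B ∩ s := by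
    ext ω
    refine and_congr_right fun (hω : ω k = x) => ?_
    rw [Set.mem_preimage, ← hω, Function.update_eq_self]
  calc P B * P A = P (B ∩ A) :=
        ((Indep_iff _ _ _).1 (indep_comap_eval_cylinderEvents_compl hindep k) _ _ hB hA).symm
    _ ≤ P s := hBA ▸ measure_mono Set.inter_subset_right

theorem ae_eq_comp_update (hindep : iIndepFun (fun i (ω : ∀ i, X i) => ω i) P) {x : X k}
    (hx : P {ω | ω k = x} ≠ 0) {β : Type*} {f g : (∀ i, X i) → β} (h : f =ᵐ[P] g) :
    (fun ω => f (update ω k x)) =ᵐ[P] fun ω => g (update ω k x) :=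
  ae_eq_comp measurable_update_left.aemeasurable
    ((Measure.absolutelyContinuous_of_le_smul (map_update_le_smul hindep x hx)).ae_eq h)

variable {E : Type*} [NormedAddCommGroup E] [NormedSpace ℝ E] {p : ℝ≥0∞} [Fact (1 ≤ p)]

variable (E p) in
def Lp.compUpdate (hindep : iIndepFun (fun i (ω : ∀ i, X i) => ω i) P) (x : X k)
    (hx : P {ω | ω k = x} ≠ 0) : Lp E p P →L[ℝ] Lp E p P :=
  (Lp.compMeasurePreservingₗᵢ ℝ (update · k x)
      ⟨measurable_update_left, rfl⟩).toContinuousLinearMap.comp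
    (Lp.LpToLpOfMeasureLeSMul (ENNReal.inv_ne_top.2 hx) (map_update_le_smul hindep x hx))

theorem Lp.coeFn_compUpdate (hindep : iIndepFun (fun i (ω : ∀ i, X i) => ω i) P) (x : X k)
    (hx : P {ω | ω k = x} ≠ 0) (f : Lp E p P) :
    Lp.compUpdate E p hindep x hx f =ᵐ[P] fun ω => f (update ω k x) :=
  (Lp.coeFn_compMeasurePreserving _ _).trans
    (ae_eq_comp measurable_update_left.aemeasurable (Lp.coeFn_LpToLpOfMeasureLeSMul _ _ f))

end UpdateCoordinate

end MeasureTheory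

section Bernoulli

variable {p : ℕ → ℝ} {P : Measure Omega} [IsProbabilityMeasure P]

theorem sqrt_mul_one_sub_pos (hp : ∀ n, 0 < p n ∧ p n < 1) (k : ℕ) :
    0 < Real.sqrt (p k * (1 - p k)) :=
  Real.sqrt_pos.2 (mul_pos (hp k).1 (sub_pos.2 (hp k).2))

theorem Zf_update_of_ne {j k : ℕ} (hj : j ≠ k) (x : Bool) (ω : Omega) :
    Zf p j (update ω k x) = Zf p j ω := by
  simp [Zf, zeta, Function.update_of_ne hj]

theorem sqrt_mul_Zf_update_sub (hp : ∀ n, 0 < p n ∧ p n < 1) (k : ℕ) (ω : Omega) :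
    Real.sqrt (p k * (1 - p k)) *
      (Zf p k (update ω k true) - Zf p k (update ω k false)) = 1 := by
  have := (sqrt_mul_one_sub_pos hp k).ne'
  simp only [Zf, zeta, Function.update_self, if_true, Bool.false_eq_true, if_false]
  field_simp
  ring

theorem exists_affine_Zf (hp : ∀ n, 0 < p n ∧ p n < 1) (i : ℕ) (h : Bool → ℝ) :
    ∃ a b : ℝ, ∀ ω : Omega, h (ω i) = a * Zf p i ω + b := by
  have hs := (sqrt_mul_one_sub_pos hp i).ne'
  refine ⟨Real.sqrt (p i * (1 - p i)) * (h true - h false),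
    (h true + h false) / 2 - (h true - h false) * ((1 - p i) - p i) / 2, fun ω => ?_⟩
  cases hω : ω i <;> simp only [Zf, zeta, hω, Bool.false_eq_true, ↓reduceIte] <;> field_simp <;>
    ring

theorem prod_eval_mem_span_ZSf (hp : ∀ n, 0 < p n ∧ p n < 1) (I : Finset ℕ)
    (h : ℕ → Bool → ℝ) :
    (fun ω : Omega => ∏ i ∈ I, h i (ω i)) ∈ Submodule.span ℝ (Set.range (ZSf p)) := by
  choose a b hab using fun i => exists_affine_Zf hp i (h i)
  have hexp : (fun ω : Omega => ∏ i ∈ I, h i (ω i)) =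
      ∑ t ∈ I.powerset, ((∏ i ∈ t, a i) * ∏ i ∈ I \ t, b i) • ZSf p t := by
    funext ω
    simp only [hab, Finset.prod_add, Finset.sum_apply, Pi.smul_apply, smul_eq_mul, ZSf,
      Finset.prod_mul_distrib]
    exact Finset.sum_congr rfl fun t _ => by ring
  rw [hexp]
  exact Submodule.sum_mem _ fun t _ => Submodule.smul_mem _ _ (Submodule.subset_span ⟨t, rfl⟩)

theorem comp_restrict_mem_span_ZSf (hp : ∀ n, 0 < p n ∧ p n < 1) (I : Finset ℕ)
    (G : (I → Bool) → ℝ) :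
    (fun ω : Omega => G (I.restrict ω)) ∈ Submodule.span ℝ (Set.range (ZSf p)) := by
  classical
  have hatom (v : ∀ i : I, Bool) : (fun ω : Omega => if I.restrict ω = v then (1 : ℝ) else 0) ∈
      Submodule.span ℝ (Set.range (ZSf p)) := by
    convert prod_eval_mem_span_ZSf hp I
      (fun i b => if hi : i ∈ I then if b = v ⟨i, hi⟩ then 1 else 0 else 0) using 2 with ω
    rw [← Finset.prod_attach]
    simp [Finset.prod_boole, funext_iff]
  have hsum : (fun ω : Omega => G (I.restrict ω)) =
      ∑ v, G v • fun ω : Omega => if I.restrict ω = v then (1 : ℝ) else 0 := by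
    funext ω
    simp
  rw [hsum]
  exact Submodule.sum_mem _ fun v _ => Submodule.smul_mem _ _ (hatom v)

theorem exists_toLp_mem_span_ZLp {g : Omega → ℝ} (hg : g ∈ Submodule.span ℝ (Set.range (ZSf p))) :
    ∃ hg2 : MemLp g 2 P, hg2.toLp g ∈ Submodule.span ℝ (Set.range (ZLp p P)) := by
  induction hg using Submodule.span_induction with
  | mem _ hx =>
    obtain ⟨σ, rfl⟩ := hx
    exact ⟨memLp_ZSf p P σ, Submodule.subset_span ⟨σ, rfl⟩⟩
  | zero => exact ⟨MemLp.zero, by rw [MemLp.toLp_zero]; exact Submodule.zero_mem _⟩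
  | add _ _ _ _ hf hg =>
    obtain ⟨hf2, hf⟩ := hf
    obtain ⟨hg2, hg⟩ := hg
    exact ⟨hf2.add hg2, by rw [MemLp.toLp_add hf2 hg2]; exact Submodule.add_mem _ hf hg⟩
  | smul a _ _ hf =>
    obtain ⟨hf2, hf⟩ := hf
    exact ⟨hf2.const_smul a, by rw [MemLp.toLp_const_smul a hf2]; exact Submodule.smul_mem _ a hf⟩

theorem dense_span_ZLp (hp : ∀ n, 0 < p n ∧ p n < 1) :
    Dense (Submodule.span ℝ (Set.range (ZLp p P)) : Set (Lp ℝ 2 P)) := by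
  have hcyl : P.MeasureDense (measurableCylinders fun _ : ℕ => Bool) :=
    .of_generateFrom_isSetAlgebra_finite P isSetAlgebra_measurableCylinders
      generateFrom_measurableCylinders.symm
  refine hcyl.dense_of_indicatorConstLp_mem (by norm_num)
    (Submodule.span ℝ (Set.range (ZLp p P))).toAddSubgroup fun s hs _ c => ?_
  obtain ⟨I, S, -, rfl⟩ := (mem_measurableCylinders s).1 hs
  obtain ⟨_, hmem⟩ := exists_toLp_mem_span_ZLp (P := P)
    (comp_restrict_mem_span_ZSf hp I (S.indicator fun _ => c))
  exact hmem

theorem measure_eval_ne_zero (hp : ∀ n, 0 < p n ∧ p n < 1)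
    (hdist : ∀ n, P {ω : Omega | ω n = true} = ENNReal.ofReal (p n)) (k : ℕ) (x : Bool) :
    P {ω : Omega | ω k = x} ≠ 0 := by
  cases x
  · have hcompl : {ω : Omega | ω k = false} = {ω : Omega | ω k = true}ᶜ := by
      ext ω
      simp
    rw [hcompl, ne_eq, prob_compl_eq_zero_iff (measurableSet_eq_fun (measurable_pi_apply k)
      measurable_const), hdist, ENNReal.ofReal_eq_one]
    exact (hp k).2.ne
  · rw [hdist, ne_eq, ENNReal.ofReal_eq_zero, not_le]
    exact (hp k).1

variable (p) in
def annihilationFun (k : ℕ) (f : Omega → ℝ) (ω : Omega) : ℝ :=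
  Real.sqrt (p k * (1 - p k)) * (f (update ω k true) - f (update ω k false))

theorem annihilationFun_ZSf (hp : ∀ n, 0 < p n ∧ p n < 1) (k : ℕ) (σ : Finset ℕ) :
    annihilationFun p k (ZSf p σ) = if k ∈ σ then ZSf p (σ.erase k) else 0 := by
  funext ω
  have hrest (τ : Finset ℕ) (hτ : k ∉ τ) (x : Bool) : ZSf p τ (update ω k x) = ZSf p τ ω :=
    Finset.prod_congr rfl fun j hj => Zf_update_of_ne (ne_of_mem_of_not_mem hj hτ) x ω
  split_ifs with hk
  · have hsplit (ω' : Omega) : ZSf p σ ω' = Zf p k ω' * ZSf p (σ.erase k) ω' :=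
      (Finset.mul_prod_erase σ _ hk).symm
    rw [annihilationFun, hsplit, hsplit, hrest _ (σ.notMem_erase k), hrest _ (σ.notMem_erase k),
      ← sub_mul, ← mul_assoc, sqrt_mul_Zf_update_sub hp, one_mul]
  · simp [annihilationFun, hrest σ hk]

theorem abs_annihilationFun_comp_le {C : ℝ → ℝ} (hC : ∀ s t : ℝ, |C s - C t| ≤ |s - t|)
    (k : ℕ) (f : Omega → ℝ) (ω : Omega) :
    |annihilationFun p k (C ∘ f) ω| ≤ |annihilationFun p k f ω| := by
  simp only [annihilationFun, abs_mul, Function.comp_apply]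
  exact mul_le_mul_of_nonneg_left (hC _ _) (abs_nonneg _)

section AnnihilationLp

variable (hp : ∀ n, 0 < p n ∧ p n < 1)
  (hdist : ∀ n, P {ω : Omega | ω n = true} = ENNReal.ofReal (p n))
  (hindep : iIndepFun (fun n (ω : Omega) => ω n) P)

variable (p P) in
def annihilationLp (k : ℕ) : Lp ℝ 2 P →L[ℝ] Lp ℝ 2 P :=
  Real.sqrt (p k * (1 - p k)) •
    (Lp.compUpdate ℝ 2 hindep true (measure_eval_ne_zero hp hdist k true) -
      Lp.compUpdate ℝ 2 hindep false (measure_eval_ne_zero hp hdist k false))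

theorem annihilationLp_ae_eq (k : ℕ) {f : Lp ℝ 2 P} {g : Omega → ℝ} (hfg : f =ᵐ[P] g) :
    annihilationLp p P hp hdist hindep k f =ᵐ[P] annihilationFun p k g := by
  have hx := measure_eval_ne_zero hp hdist k
  have hcomp (x : Bool) :
      Lp.compUpdate ℝ 2 hindep x (hx x) f =ᵐ[P] fun ω => g (update ω k x) :=
    (Lp.coeFn_compUpdate hindep x (hx x) f).trans (ae_eq_comp_update hindep (hx x) hfg)
  rw [annihilationLp, smul_apply, sub_apply]
  exact (Lp.coeFn_smul _ _).trans
    (((Lp.coeFn_sub _ _).trans ((hcomp true).sub (hcomp false))).const_smul _)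

theorem annihilationLp_ZLp (k : ℕ) (σ : Finset ℕ) :
    annihilationLp p P hp hdist hindep k (ZLp p P σ) =
      if k ∈ σ then ZLp p P (σ.erase k) else 0 := by
  refine Lp.ext ((annihilationLp_ae_eq hp hdist hindep k (MemLp.coeFn_toLp _)).trans ?_)
  rw [annihilationFun_ZSf hp]
  split_ifs
  · exact (MemLp.coeFn_toLp _).symm
  · exact (Lp.coeFn_zero _ _ _).symm

theorem eq_annihilationLp_of_apply_ZLp {D : Lp ℝ 2 P →L[ℝ] Lp ℝ 2 P} {k : ℕ}
    (hD : ∀ σ : Finset ℕ, D (ZLp p P σ) = if k ∈ σ then ZLp p P (σ.erase k) else 0) :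
    D = annihilationLp p P hp hdist hindep k :=
  ContinuousLinearMap.ext_on (dense_span_ZLp hp) (by
    rintro - ⟨σ, rfl⟩
    rw [hD, annihilationLp_ZLp])

end AnnihilationLp

end Bernoulli

theorem contraction_decreases_gradient_norm
    (p : ℕ → ℝ) (P : Measure Omega) [IsProbabilityMeasure P]
    (hp : ∀ n, 0 < p n ∧ p n < 1)
    (hdist : ∀ n, P {ω : Omega | ω n = true} = ENNReal.ofReal (p n))
    (hindep : iIndepFun (fun n (ω : Omega) => ω n) P)
    (D : ℕ → (Lp ℝ 2 P →L[ℝ] Lp ℝ 2 P))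
    (hD : ∀ (k : ℕ) (σ : Finset ℕ),
      D k (ZLp p P σ) = if k ∈ σ then ZLp p P (σ.erase k) else 0)
    (C : ℝ → ℝ) (hC0 : C 0 = 0) (hC : ∀ s t : ℝ, |C s - C t| ≤ |s - t|)
    (ξ : Lp ℝ 2 P) (k : ℕ) :
    ∃ hmem : MemLp (fun ω => C ((ξ : Omega → ℝ) ω)) 2 P,
      ‖D k (hmem.toLp _)‖ ≤ ‖D k ξ‖ := by
  have hC1 : LipschitzWith 1 C :=
    LipschitzWith.of_dist_le_mul fun s t => by simpa [Real.dist_eq] using hC s t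
  have hmem : MemLp (fun ω => C (ξ ω)) 2 P := hC1.comp_memLp hC0 (Lp.memLp ξ)
  refine ⟨hmem, ?_⟩
  rw [eq_annihilationLp_of_apply_ZLp hp hdist hindep (hD k)]
  refine Lp.norm_le_norm_of_ae_le ?_
  filter_upwards [annihilationLp_ae_eq hp hdist hindep k (MemLp.coeFn_toLp hmem),
    annihilationLp_ae_eq hp hdist hindep k Filter.EventuallyEq.rfl] with ω hCξ hξ
  rw [hCξ, hξ]
  exact abs_annihilationFun_comp_le hC k ξ ω

end
end

section
/- The w-Ornstein–Uhlenbeck semigroup is a Markov semigroup: for every t ≥ 0 and every ξ ∈ L²(Ω, ℙ) with 0 ≤ ξ ≤ 1 ℙ-almost everywhere, one has 0 ≤ P^w_tξ ≤ 1 ℙ-almost everywhere. -/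
open MeasureTheory ProbabilityTheory
open scoped RealInnerProductSpace ENNReal

noncomputable section

/-!
Write `h = P_t ξ` and let `A` be an event depending only on the coordinates `≤ n`. By independence
and `𝔼 Z_j = 0`, `∫_A Z_σ = 0` unless `σ ⊆ {0, …, n}`, so
`∫_A h = ∑_{σ ⊆ {0,…,n}} e^{-t #_w σ} ⟨Z_σ, ξ⟩ ∫_A Z_σ = ∫ F ξ` with `F y = ∫_A K(x, y) dℙ(x)` for
the Mehler kernel `K(x, y) = ∏_{j ≤ n} (1 + e^{-t w_j} Z_j(x) Z_j(y))`. Each factor of `K` is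
nonnegative because `Z_j(x) Z_j(y) ≥ -1`, and `∫ F = ℙ(A)`; hence `0 ≤ ∫_A h ≤ ℙ(A)`. Thus
`𝔼[h | ℱ_n] ∈ [0, 1]` for the coordinate filtration `ℱ`, and Lévy's upward theorem passes this
to `h`.
-/

section LevyUpward

variable {Ω : Type*} {m m0 : MeasurableSpace Ω} {μ : Measure Ω} [IsFiniteMeasure μ]
  {f : Ω → ℝ} {c : ℝ}

lemma ae_const_le_condExp_of_forall_le_setIntegral (hm : m ≤ m0) (hf : Integrable f μ)
    (h : ∀ s, MeasurableSet[m] s → c * μ.real s ≤ ∫ x in s, f x ∂μ) :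
    ∀ᵐ x ∂μ, c ≤ μ[f|m] x := by
  have hmeas : StronglyMeasurable[m] fun x => μ[f|m] x - c :=
    stronglyMeasurable_condExp.sub stronglyMeasurable_const
  have h0 : 0 ≤ᵐ[μ.trim hm] fun x => μ[f|m] x - c := by
    refine ae_nonneg_of_forall_setIntegral_nonneg
      ((integrable_condExp.sub (integrable_const c)).trim hm hmeas) fun s hs _ => ?_
    rw [← setIntegral_trim hm hmeas hs,
      integral_sub integrable_condExp.integrableOn (integrable_const c).integrableOn,
      setIntegral_condExp hm hf hs, setIntegral_const, smul_eq_mul]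
    linarith [h s hs]
  filter_upwards [ae_of_ae_trim hm h0] with x hx
  linarith [show (0 : ℝ) ≤ μ[f|m] x - c from hx]

lemma ae_const_le_of_forall_le_setIntegral (ℱ : Filtration ℕ m0) (hℱ : ⨆ n, ℱ n = m0)
    (hf : Integrable f μ) (h : ∀ n s, MeasurableSet[ℱ n] s → c * μ.real s ≤ ∫ x in s, f x ∂μ) :
    ∀ᵐ x ∂μ, c ≤ f x := by
  have hself : μ[f|⨆ n, ℱ n] =ᵐ[μ] f := by
    rw [hℱ]; exact condExp_of_aestronglyMeasurable' le_rfl hf.1 hf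
  have hbound : ∀ᵐ x ∂μ, ∀ n, c ≤ μ[f|ℱ n] x := ae_all_iff.2 fun n =>
    ae_const_le_condExp_of_forall_le_setIntegral (ℱ.le n) hf (h n)
  filter_upwards [tendsto_ae_condExp (μ := μ) (ℱ := ℱ) f, hself, hbound] with x hlim hx hcx
  exact hx ▸ ge_of_tendsto' hlim hcx

lemma ae_mem_Icc_of_forall_setIntegral_mem (ℱ : Filtration ℕ m0) (hℱ : ⨆ n, ℱ n = m0)
    (hf : Integrable f μ) {a b : ℝ} (h : ∀ n s, MeasurableSet[ℱ n] s →
      a * μ.real s ≤ ∫ x in s, f x ∂μ ∧ ∫ x in s, f x ∂μ ≤ b * μ.real s) :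
    ∀ᵐ x ∂μ, f x ∈ Set.Icc a b := by
  have hlow := ae_const_le_of_forall_le_setIntegral ℱ hℱ hf fun n s hs => (h n s hs).1
  have hup := ae_const_le_of_forall_le_setIntegral (f := -f) (c := -b) ℱ hℱ hf.neg
    fun n s hs => by
      simp only [Pi.neg_apply, integral_neg, neg_mul, neg_le_neg_iff]
      exact (h n s hs).2
  filter_upwards [hlow, hup] with x hax hbx
  exact ⟨hax, neg_le_neg_iff.1 hbx⟩

end LevyUpward

namespace MeasureTheory.Filtration

variable {ι : Type*} [Preorder ι] {X : ι → Type*} [∀ i, MeasurableSpace (X i)]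

lemma piLE_eq_iSup_comap (i : ι) :
    piLE (X := X) i =
      ⨆ j ∈ Set.Iic i, MeasurableSpace.comap (fun x : Π k, X k => x j) inferInstance := by
  change MeasurableSpace.comap _ MeasurableSpace.pi = _
  rw [MeasurableSpace.pi, MeasurableSpace.comap_iSup, iSup_subtype']
  simp only [MeasurableSpace.comap_comp]
  rfl

lemma iSup_piLE : ⨆ i, piLE (X := X) i = MeasurableSpace.pi := by
  refine le_antisymm (iSup_le fun i => (piLE (X := X)).le i) (iSup_le fun i => ?_)
  refine le_iSup_of_le i ?_
  rw [piLE_eq_iSup_comap i]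
  exact le_iSup₂ (f := fun j (_ : j ∈ Set.Iic i) =>
    MeasurableSpace.comap (fun x : Π k, X k => x j) inferInstance) i le_rfl

end MeasureTheory.Filtration

abbrev coordMeasurableSpace (S : Set ℕ) : MeasurableSpace Omega :=
  ⨆ i ∈ S, MeasurableSpace.comap (fun ω : Omega => ω i) inferInstance

lemma coordMeasurableSpace_mono {S T : Set ℕ} (h : S ⊆ T) :
    coordMeasurableSpace S ≤ coordMeasurableSpace T :=
  biSup_mono h

lemma coordMeasurableSpace_le (S : Set ℕ) : coordMeasurableSpace S ≤ MeasurableSpace.pi :=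
  iSup₂_le fun i _ => (measurable_pi_apply i).comap_le

lemma piLE_eq_coordMeasurableSpace (n : ℕ) :
    Filtration.piLE (X := fun _ : ℕ => Bool) n = coordMeasurableSpace (Set.Iic n) :=
  Filtration.piLE_eq_iSup_comap n

lemma measurable_Zf_coord (p : ℕ → ℝ) (j : ℕ) :
    Measurable[coordMeasurableSpace {j}] (Zf p j) := by
  have hj : Measurable[coordMeasurableSpace {j}] fun ω : Omega => ω j :=
    Measurable.of_comap_le (le_iSup₂ (f := fun i (_ : i ∈ ({j} : Set ℕ)) =>
      MeasurableSpace.comap (fun ω : Omega => ω i) inferInstance) j rfl)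
  exact (Measurable.of_discrete (f := fun b : Bool => ((if b then 1 else -1) + (1 - p j) - p j) /
    (2 * Real.sqrt (p j * (1 - p j))))).comp hj

lemma measurable_ZSf_coord (p : ℕ → ℝ) (σ : Finset ℕ) :
    Measurable[coordMeasurableSpace σ] (ZSf p σ) :=
  Finset.measurable_prod σ fun j hj =>
    (measurable_Zf_coord p j).mono (coordMeasurableSpace_mono (by simpa using hj)) le_rfl

lemma indep_coordMeasurableSpace {P : Measure Omega}
    (hindep : iIndepFun (fun n (ω : Omega) => ω n) P) {S T : Set ℕ} (hST : Disjoint S T) :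
    Indep (coordMeasurableSpace S) (coordMeasurableSpace T) P :=
  indep_iSup_of_disjoint (fun i => (measurable_pi_apply i).comap_le) hindep.iIndep hST

lemma Zf_mul_Zf_of_ne {p : ℕ → ℝ} {j : ℕ} (hp : 0 < p j ∧ p j < 1) {x y : Omega}
    (h : x j ≠ y j) : Zf p j x * Zf p j y = -1 := by
  have hpq : 0 < p j * (1 - p j) := mul_pos hp.1 (by linarith [hp.2])
  have hsq := Real.sq_sqrt hpq.le
  have hs := Real.sqrt_pos.2 hpq
  rcases Bool.eq_false_or_eq_true (x j) with hx | hx <;>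
    rcases Bool.eq_false_or_eq_true (y j) with hy | hy <;>
    simp only [hx, hy, ne_eq, not_true_eq_false] at h <;>
    · simp only [Zf, zeta, hx, hy, if_true, Bool.false_eq_true, if_false]
      field_simp
      rw [hsq]
      ring

lemma neg_one_le_Zf_mul_Zf {p : ℕ → ℝ} {j : ℕ} (hp : 0 < p j ∧ p j < 1) (x y : Omega) :
    -1 ≤ Zf p j x * Zf p j y := by
  by_cases h : x j = y j
  · have hxy : Zf p j x = Zf p j y := by simp only [Zf, zeta, h]
    rw [hxy]
    nlinarith [mul_self_nonneg (Zf p j y)]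
  · exact (Zf_mul_Zf_of_ne hp h).ge

def mehlerKernel (p w : ℕ → ℝ) (t : ℝ) (I : Finset ℕ) (x y : Omega) : ℝ :=
  ∏ j ∈ I, (1 + Real.exp (-(t * w j)) * (Zf p j x * Zf p j y))

lemma mehlerKernel_nonneg {p w : ℕ → ℝ} {t : ℝ} (hp : ∀ n, 0 < p n ∧ p n < 1)
    (hw : ∀ n, 0 ≤ w n) (ht : 0 ≤ t) (I : Finset ℕ) (x y : Omega) :
    0 ≤ mehlerKernel p w t I x y := by
  refine Finset.prod_nonneg fun j _ => ?_
  have hZ := neg_one_le_Zf_mul_Zf (hp j) x y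
  have hρ1 : Real.exp (-(t * w j)) ≤ 1 :=
    Real.exp_le_one_iff.2 (neg_nonpos.2 (mul_nonneg ht (hw j)))
  nlinarith [Real.exp_pos (-(t * w j))]

lemma mehlerKernel_eq_sum (p w : ℕ → ℝ) (t : ℝ) (I : Finset ℕ) (x y : Omega) :
    mehlerKernel p w t I x y =
      ∑ σ ∈ I.powerset, Real.exp (-(t * cw w σ)) * (ZSf p σ x * ZSf p σ y) := by
  simp only [mehlerKernel, add_comm (1 : ℝ), Finset.prod_add, Finset.prod_const_one, mul_one]
  refine Finset.sum_congr rfl fun σ _ => ?_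
  rw [Finset.prod_mul_distrib, Finset.prod_mul_distrib, ← Real.exp_sum, cw, Finset.mul_sum,
    Finset.sum_neg_distrib, ZSf, ZSf]

section Walsh

variable {p : ℕ → ℝ} {P : Measure Omega} [IsProbabilityMeasure P]

lemma integral_zeta (n : ℕ) :
    ∫ ω, zeta n ω ∂P = 2 * P.real {ω | ω n = true} - 1 := by
  have hA : MeasurableSet {ω : Omega | ω n = true} :=
    measurableSet_eq_fun (measurable_pi_apply n) measurable_const
  have hzeta : zeta n = fun ω => 2 * {ω : Omega | ω n = true}.indicator 1 ω - 1 := by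
    funext ω
    by_cases h : ω n <;> simp [zeta, h]; norm_num
  rw [hzeta, integral_sub ((integrable_indicator_iff hA).2 (integrable_const 1).integrableOn
    |>.const_mul 2) (integrable_const 1), integral_const_mul, integral_indicator_one hA]
  simp

lemma integral_Zf {n : ℕ}
    (hp : 0 ≤ p n) (hdist : P {ω : Omega | ω n = true} = ENNReal.ofReal (p n)) :
    ∫ ω, Zf p n ω ∂P = 0 := by
  have hint : Integrable (zeta n) P :=
    .of_bound ((Measurable.of_discrete (f := fun b : Bool => if b then (1 : ℝ) else -1)).comp
      (measurable_pi_apply n)).aestronglyMeasurable 1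
      (ae_of_all _ fun ω => by by_cases h : ω n <;> simp [zeta, h])
  simp only [Zf]
  rw [integral_div, integral_sub (f := fun ω => zeta n ω + (1 - p n))
    (hint.add (integrable_const _)) (integrable_const _),
    integral_add hint (integrable_const _), integral_zeta, measureReal_def, hdist,
    ENNReal.toReal_ofReal hp]
  simp only [integral_const, probReal_univ, one_smul]
  ring

lemma integrable_ZSf (σ : Finset ℕ) : Integrable (ZSf p σ) P :=
  (memLp_ZSf p P σ).integrable one_le_two

lemma integrable_ZSf_mul (σ : Finset ℕ) (ξ : Lp ℝ 2 P) :
    Integrable (fun ω => ZSf p σ ω * ξ ω) P :=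
  (memLp_ZSf p P σ).integrable_mul (Lp.memLp ξ)

lemma setIntegral_ZLp (σ : Finset ℕ) (A : Set Omega) :
    ∫ ω in A, ZLp p P σ ω ∂P = ∫ ω in A, ZSf p σ ω ∂P :=
  integral_congr_ae (ae_restrict_of_ae (MemLp.coeFn_toLp _))

lemma inner_ZLp_s16 (σ : Finset ℕ) (ξ : Lp ℝ 2 P) :
    ⟪ZLp p P σ, ξ⟫ = ∫ ω, ZSf p σ ω * ξ ω ∂P := by
  rw [L2.inner_def]
  refine integral_congr_ae ?_
  filter_upwards [MemLp.coeFn_toLp (memLp_ZSf p P σ)] with ω hω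
  simp [ZLp, hω, mul_comm]

lemma integral_ZSf_mul_eq_zero {j : ℕ} (hp : 0 ≤ p j)
    (hdist : P {ω : Omega | ω j = true} = ENNReal.ofReal (p j))
    (hindep : iIndepFun (fun n (ω : Omega) => ω n) P) {σ : Finset ℕ} (hj : j ∈ σ)
    {g : Omega → ℝ} (hg : Measurable[coordMeasurableSpace {j}ᶜ] g) :
    ∫ ω, ZSf p σ ω * g ω ∂P = 0 := by
  have hrest : Measurable[coordMeasurableSpace {j}ᶜ] fun ω => ZSf p (σ.erase j) ω * g ω :=
    ((measurable_ZSf_coord p _).mono (coordMeasurableSpace_mono (by simp)) le_rfl).mul hg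
  have hind : IndepFun (Zf p j) (fun ω => ZSf p (σ.erase j) ω * g ω) P := by
    rw [IndepFun_iff_Indep]
    exact indep_of_indep_of_le_left (indep_of_indep_of_le_right
      (indep_coordMeasurableSpace hindep disjoint_compl_right) hrest.comap_le)
      (measurable_Zf_coord p j).comap_le
  calc ∫ ω, ZSf p σ ω * g ω ∂P = ∫ ω, (Zf p j * fun ω => ZSf p (σ.erase j) ω * g ω) ω ∂P := by
        simp only [ZSf, ← Finset.mul_prod_erase σ _ hj, Pi.mul_apply, mul_assoc]
    _ = (∫ ω, Zf p j ω ∂P) * ∫ ω, ZSf p (σ.erase j) ω * g ω ∂P :=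
        hind.integral_mul_eq_mul_integral
          ((measurable_Zf_coord p j).mono (coordMeasurableSpace_le _) le_rfl).aestronglyMeasurable
          (hrest.mono (coordMeasurableSpace_le _) le_rfl).aestronglyMeasurable
    _ = 0 := by rw [integral_Zf hp hdist, zero_mul]

lemma integral_ZSf_eq_zero (hp : ∀ n, 0 ≤ p n)
    (hdist : ∀ n, P {ω : Omega | ω n = true} = ENNReal.ofReal (p n))
    (hindep : iIndepFun (fun n (ω : Omega) => ω n) P) {σ : Finset ℕ} (hσ : σ.Nonempty) :
    ∫ ω, ZSf p σ ω ∂P = 0 := by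
  obtain ⟨j, hj⟩ := hσ
  simpa using integral_ZSf_mul_eq_zero (hp j) (hdist j) hindep hj (g := fun _ => 1)
    measurable_const

lemma setIntegral_ZSf_eq_zero (hp : ∀ n, 0 ≤ p n)
    (hdist : ∀ n, P {ω : Omega | ω n = true} = ENNReal.ofReal (p n))
    (hindep : iIndepFun (fun n (ω : Omega) => ω n) P) {n : ℕ} {A : Set Omega}
    (hA : MeasurableSet[Filtration.piLE n] A) {σ : Finset ℕ} (hσ : ¬σ ⊆ Finset.Iic n) :
    ∫ ω in A, ZSf p σ ω ∂P = 0 := by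
  obtain ⟨j, hjσ, hjn⟩ := Finset.not_subset.1 hσ
  rw [piLE_eq_coordMeasurableSpace] at hA
  have hAj : MeasurableSet[coordMeasurableSpace {j}ᶜ] A :=
    coordMeasurableSpace_mono (fun i (hi : i ≤ n) (hij : i = j) =>
      hjn (Finset.mem_Iic.2 (hij ▸ hi))) _ hA
  calc ∫ ω in A, ZSf p σ ω ∂P = ∫ ω, A.indicator (ZSf p σ) ω ∂P :=
        (integral_indicator (coordMeasurableSpace_le _ A hAj)).symm
    _ = ∫ ω, ZSf p σ ω * A.indicator 1 ω ∂P := by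
        congr 1; funext ω; by_cases hω : ω ∈ A <;> simp [hω]
    _ = 0 := integral_ZSf_mul_eq_zero (hp j) (hdist j) hindep hjσ
        (measurable_const.indicator hAj)

lemma setIntegral_mehlerKernel (w : ℕ → ℝ) (t : ℝ) (I : Finset ℕ) (A : Set Omega)
    (y : Omega) :
    ∫ x in A, mehlerKernel p w t I x y ∂P =
      ∑ σ ∈ I.powerset, Real.exp (-(t * cw w σ)) * (∫ x in A, ZSf p σ x ∂P) * ZSf p σ y := by
  simp only [mehlerKernel_eq_sum]
  rw [integral_finsetSum _ fun σ _ =>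
    (((integrable_ZSf σ).mul_const _).const_mul _).integrableOn]
  refine Finset.sum_congr rfl fun σ _ => ?_
  rw [integral_const_mul, integral_mul_const, mul_assoc]

lemma setIntegral_eq_sum_of_hasSum (hp : ∀ n, 0 ≤ p n)
    (hdist : ∀ n, P {ω : Omega | ω n = true} = ENNReal.ofReal (p n))
    (hindep : iIndepFun (fun n (ω : Omega) => ω n) P) {c : Finset ℕ → ℝ} {h : Lp ℝ 2 P}
    (hs : HasSum (fun σ => c σ • ZLp p P σ) h) {n : ℕ} {A : Set Omega}
    (hA : MeasurableSet[Filtration.piLE n] A) :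
    ∫ ω in A, h ω ∂P = ∑ σ ∈ (Finset.Iic n).powerset, c σ * ∫ ω in A, ZSf p σ ω ∂P := by
  have hsum := (innerSL ℝ (indicatorConstLp 2 (Filtration.piLE.le n A hA)
    (measure_ne_top P A) (1 : ℝ))).hasSum hs
  simp only [innerSL_apply_apply, inner_smul_right, L2.inner_indicatorConstLp_one,
    setIntegral_ZLp] at hsum
  refine hsum.unique (hasSum_sum_of_ne_finset_zero fun σ hσ => ?_)
  rw [setIntegral_ZSf_eq_zero hp hdist hindep hA (Finset.mem_powerset.not.1 hσ), mul_zero]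

lemma sum_exp_inner_setIntegral_mem_Icc {w : ℕ → ℝ} (hp : ∀ n, 0 < p n ∧ p n < 1)
    (hdist : ∀ n, P {ω : Omega | ω n = true} = ENNReal.ofReal (p n))
    (hindep : iIndepFun (fun n (ω : Omega) => ω n) P) (hw : ∀ n, 0 ≤ w n) {t : ℝ} (ht : 0 ≤ t)
    {ξ : Lp ℝ 2 P} (hξ : ∀ᵐ ω ∂P, 0 ≤ (ξ : Omega → ℝ) ω ∧ (ξ : Omega → ℝ) ω ≤ 1)
    {A : Set Omega} (hA : MeasurableSet A) (I : Finset ℕ) :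
    ∑ σ ∈ I.powerset, Real.exp (-(t * cw w σ)) * ⟪ZLp p P σ, ξ⟫ * ∫ ω in A, ZSf p σ ω ∂P ∈
      Set.Icc 0 (P.real A) := by
  set F : Omega → ℝ := fun y =>
    ∑ σ ∈ I.powerset, Real.exp (-(t * cw w σ)) * (∫ x in A, ZSf p σ x ∂P) * ZSf p σ y
  have hF_nonneg : ∀ y, 0 ≤ F y := fun y => by
    rw [show F y = ∫ x in A, mehlerKernel p w t I x y ∂P from
      (setIntegral_mehlerKernel w t I A y).symm]
    exact setIntegral_nonneg hA fun x _ => mehlerKernel_nonneg hp hw ht I x y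
  have hF_int : Integrable F P :=
    integrable_finsetSum _ fun σ _ => (integrable_ZSf σ).const_mul _
  have hFξ_int : Integrable (fun y => F y * ξ y) P := by
    simp only [F, Finset.sum_mul, mul_assoc]
    exact integrable_finsetSum _ fun σ _ => ((integrable_ZSf_mul σ ξ).const_mul _).const_mul _
  have hFξ : ∫ y, F y * ξ y ∂P =
      ∑ σ ∈ I.powerset, Real.exp (-(t * cw w σ)) * ⟪ZLp p P σ, ξ⟫ * ∫ ω in A, ZSf p σ ω ∂P := by
    simp only [F, Finset.sum_mul, mul_assoc]
    rw [integral_finsetSum _ fun σ _ =>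
      ((integrable_ZSf_mul σ ξ).const_mul _).const_mul _]
    refine Finset.sum_congr rfl fun σ _ => ?_
    rw [integral_const_mul, integral_const_mul, inner_ZLp_s16]
    ring
  have hF_total : ∫ y, F y ∂P = P.real A := by
    rw [integral_finsetSum _ fun σ _ => (integrable_ZSf σ).const_mul _,
      Finset.sum_eq_single ∅ (fun σ _ hσ => by
        rw [integral_const_mul, integral_ZSf_eq_zero (fun n => (hp n).1.le) hdist hindep
          (Finset.nonempty_iff_ne_empty.2 hσ), mul_zero])
        (fun h => absurd (Finset.empty_mem_powerset I) h)]
    simp [cw, ZSf]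
  rw [← hFξ]
  constructor
  · exact integral_nonneg_of_ae (by
      filter_upwards [hξ] with y hy using mul_nonneg (hF_nonneg y) hy.1)
  · exact hF_total ▸ integral_mono_ae hFξ_int hF_int (by
      filter_upwards [hξ] with y hy using mul_le_of_le_one_right (hF_nonneg y) hy.2)

end Walsh

theorem OU_semigroup_is_Markov
    (p : ℕ → ℝ) (P : Measure Omega) [IsProbabilityMeasure P]
    (hp : ∀ n, 0 < p n ∧ p n < 1)
    (hdist : ∀ n, P {ω : Omega | ω n = true} = ENNReal.ofReal (p n))
    (hindep : iIndepFun (fun n (ω : Omega) => ω n) P)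
    (w : ℕ → ℝ) (hw : ∀ n, 0 ≤ w n)
    (Pt : ℝ → Lp ℝ 2 P → Lp ℝ 2 P)
    (hPt : ∀ t ≥ (0 : ℝ), ∀ ξ : Lp ℝ 2 P,
      HasSum (fun σ : Finset ℕ => (Real.exp (-(t * cw w σ)) * ⟪ZLp p P σ, ξ⟫) • ZLp p P σ)
        (Pt t ξ))
    (t : ℝ) (ht : 0 ≤ t) (ξ : Lp ℝ 2 P)
    (hξ : ∀ᵐ ω ∂P, 0 ≤ (ξ : Omega → ℝ) ω ∧ (ξ : Omega → ℝ) ω ≤ 1) :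
    ∀ᵐ ω ∂P, 0 ≤ (Pt t ξ : Omega → ℝ) ω ∧ (Pt t ξ : Omega → ℝ) ω ≤ 1 := by
  have hbounds : ∀ n A, MeasurableSet[Filtration.piLE n] A →
      0 * P.real A ≤ ∫ ω in A, Pt t ξ ω ∂P ∧ ∫ ω in A, Pt t ξ ω ∂P ≤ 1 * P.real A := by
    intro n A hA
    rw [zero_mul, one_mul, setIntegral_eq_sum_of_hasSum (fun n => (hp n).1.le) hdist hindep
      (hPt t ht ξ) hA]
    exact sum_exp_inner_setIntegral_mem_Icc hp hdist hindep hw ht hξ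
      (Filtration.piLE.le n A hA) _
  exact ae_mem_Icc_of_forall_setIntegral_mem Filtration.piLE Filtration.iSup_piLE
    ((Lp.memLp _).integrable one_le_two) hbounds
end
end
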